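/- (Provable weak uniqueness of least elements in Q.) For any formula μ(v₀) of the language of arithmetic and any natural number i, Robinson arithmetic proves: Q ⊢ [¬μ(i) ∧ (∀v₂ < i)μ(v₂)] → (∀v₀)[(¬μ(v₀) ∧ (∀v₂ < v₀)μ(v₂)) → v₀ = i], where i also denotes the numeral for i. -/
import Mathlib


namespace Boolos

/-- Terms of the first-order language of arithmetic: variables v₀,v₁,…, 0, successor s, +, ·. -/
inductive Term : Type
  | var : ℕ → Term
  | zero : Term
  | succ : Term → Term
  | add : Term → Term → Term
  | mul : Term → Term → Term
  deriving DecidableEq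

/-- Formulas of the first-order language of arithmetic. -/
inductive Formula : Type
  | eq : Term → Term → Formula
  | lt : Term → Term → Formula
  | not : Formula → Formula
  | and : Formula → Formula → Formula
  | or : Formula → Formula → Formula
  | imp : Formula → Formula → Formula
  | all : ℕ → Formula → Formula
  | ex : ℕ → Formula → Formula
  deriving DecidableEq

/-- The primitive symbols of the language (finitely many apart from the variables). -/
inductive Symbol : Type
  | zero : Symbol
  | succ : Symbol
  | plus : Symbol
  | times : Symbol
  | eqs : Symbol
  | lts : Symbol
  | nots : Symbol
  | ands : Symbol
  | ors : Symbol
  | imps : Symbol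
  | alls : Symbol
  | exs : Symbol
  | var : ℕ → Symbol
  deriving DecidableEq

/-- Gödel numbers of the primitive symbols. -/
def Symbol.code : Symbol → ℕ
  | .zero => 1
  | .succ => 2
  | .plus => 3
  | .times => 4
  | .eqs => 5
  | .lts => 6
  | .nots => 7
  | .ands => 8
  | .ors => 9
  | .imps => 10
  | .alls => 11
  | .exs => 12
  | .var n => 13 + n

/-- The sequence of symbols occurring in a term. -/
def Term.symbols : Term → List Symbol
  | .var i => [.var i]
  | .zero => [.zero]
  | .succ t => .succ :: t.symbols
  | .add t u => t.symbols ++ .plus :: u.symbols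
  | .mul t u => t.symbols ++ .times :: u.symbols

/-- The sequence of symbols occurring in a formula. -/
def Formula.symbols : Formula → List Symbol
  | .eq t u => t.symbols ++ .eqs :: u.symbols
  | .lt t u => t.symbols ++ .lts :: u.symbols
  | .not φ => .nots :: φ.symbols
  | .and φ ψ => φ.symbols ++ .ands :: ψ.symbols
  | .or φ ψ => φ.symbols ++ .ors :: ψ.symbols
  | .imp φ ψ => φ.symbols ++ .imps :: ψ.symbols
  | .all i φ => .alls :: .var i :: φ.symbols
  | .ex i φ => .exs :: .var i :: φ.symbols

/-- |e| : the length (number of symbols) of a term. -/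
def Term.length (t : Term) : ℕ := t.symbols.length

/-- |μ| : the length (number of symbols) of a formula. -/
def Formula.length (φ : Formula) : ℕ := φ.symbols.length

/-- A fixed standard (pairing-based, injective) Gödel numbering of terms. -/
def Term.code : Term → ℕ
  | .var i => Nat.pair 0 i
  | .zero => Nat.pair 1 0
  | .succ t => Nat.pair 2 t.code
  | .add t u => Nat.pair 3 (Nat.pair t.code u.code)
  | .mul t u => Nat.pair 4 (Nat.pair t.code u.code)

/-- ⌜μ⌝ : the Gödel number of a formula. -/
def Formula.gnum : Formula → ℕ
  | .eq t u => Nat.pair 0 (Nat.pair t.code u.code)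
  | .lt t u => Nat.pair 1 (Nat.pair t.code u.code)
  | .not φ => Nat.pair 2 φ.gnum
  | .and φ ψ => Nat.pair 3 (Nat.pair φ.gnum ψ.gnum)
  | .or φ ψ => Nat.pair 4 (Nat.pair φ.gnum ψ.gnum)
  | .imp φ ψ => Nat.pair 5 (Nat.pair φ.gnum ψ.gnum)
  | .all i φ => Nat.pair 6 (Nat.pair i φ.gnum)
  | .ex i φ => Nat.pair 7 (Nat.pair i φ.gnum)

/-- The variables occurring in a term. -/
def Term.varsOf : Term → Finset ℕ
  | .var i => {i}
  | .zero => ∅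
  | .succ t => t.varsOf
  | .add t u => t.varsOf ∪ u.varsOf
  | .mul t u => t.varsOf ∪ u.varsOf

/-- All variables (free or bound) occurring in a formula. -/
def Formula.allVars : Formula → Finset ℕ
  | .eq t u => t.varsOf ∪ u.varsOf
  | .lt t u => t.varsOf ∪ u.varsOf
  | .not φ => φ.allVars
  | .and φ ψ => φ.allVars ∪ ψ.allVars
  | .or φ ψ => φ.allVars ∪ ψ.allVars
  | .imp φ ψ => φ.allVars ∪ ψ.allVars
  | .all i φ => insert i φ.allVars
  | .ex i φ => insert i φ.allVars

/-- The free variables of a formula. -/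
def Formula.freeVars : Formula → Finset ℕ
  | .eq t u => t.varsOf ∪ u.varsOf
  | .lt t u => t.varsOf ∪ u.varsOf
  | .not φ => φ.freeVars
  | .and φ ψ => φ.freeVars ∪ ψ.freeVars
  | .or φ ψ => φ.freeVars ∪ ψ.freeVars
  | .imp φ ψ => φ.freeVars ∪ ψ.freeVars
  | .all i φ => φ.freeVars.erase i
  | .ex i φ => φ.freeVars.erase i

/-- Substitution of a term for a variable in a term. -/
def Term.subst : Term → ℕ → Term → Term
  | .var i, x, s => if i = x then s else .var i
  | .zero, _, _ => .zero
  | .succ t, x, s => .succ (t.subst x s)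
  | .add t u, x, s => .add (t.subst x s) (u.subst x s)
  | .mul t u, x, s => .mul (t.subst x s) (u.subst x s)

/-- Substitution of a term for the free occurrences of a variable in a formula. -/
def Formula.subst : Formula → ℕ → Term → Formula
  | .eq t u, x, s => .eq (t.subst x s) (u.subst x s)
  | .lt t u, x, s => .lt (t.subst x s) (u.subst x s)
  | .not φ, x, s => .not (φ.subst x s)
  | .and φ ψ, x, s => .and (φ.subst x s) (ψ.subst x s)
  | .or φ ψ, x, s => .or (φ.subst x s) (ψ.subst x s)
  | .imp φ ψ, x, s => .imp (φ.subst x s) (ψ.subst x s)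
  | .all i φ, x, s => if i = x then .all i φ else .all i (φ.subst x s)
  | .ex i φ, x, s => if i = x then .ex i φ else .ex i (φ.subst x s)

/-- The number of occurrences of a variable in a term. -/
def Term.countOcc : Term → ℕ → ℕ
  | .var i, x => if i = x then 1 else 0
  | .zero, _ => 0
  | .succ t, x => t.countOcc x
  | .add t u, x => t.countOcc x + u.countOcc x
  | .mul t u, x => t.countOcc x + u.countOcc x

/-- The number of free occurrences of a variable in a formula. -/
def Formula.countFreeOcc : Formula → ℕ → ℕ
  | .eq t u, x => t.countOcc x + u.countOcc x
  | .lt t u, x => t.countOcc x + u.countOcc x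
  | .not φ, x => φ.countFreeOcc x
  | .and φ ψ, x => φ.countFreeOcc x + ψ.countFreeOcc x
  | .or φ ψ, x => φ.countFreeOcc x + ψ.countFreeOcc x
  | .imp φ ψ, x => φ.countFreeOcc x + ψ.countFreeOcc x
  | .all i φ, x => if i = x then 0 else φ.countFreeOcc x
  | .ex i φ, x => if i = x then 0 else φ.countFreeOcc x

/-- The numeral s s … s 0 for a natural number. -/
def numeral : ℕ → Term
  | 0 => .zero
  | n + 1 => .succ (numeral n)

/-- Structures for the language of arithmetic. -/
structure Struct where
  carrier : Type
  zero : carrier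
  succ : carrier → carrier
  add : carrier → carrier → carrier
  mul : carrier → carrier → carrier
  lt : carrier → carrier → Prop

/-- The value of a term in a structure under an assignment. -/
def Term.val (M : Struct) (v : ℕ → M.carrier) : Term → M.carrier
  | .var i => v i
  | .zero => M.zero
  | .succ t => M.succ (Term.val M v t)
  | .add t u => M.add (Term.val M v t) (Term.val M v u)
  | .mul t u => M.mul (Term.val M v t) (Term.val M v u)

/-- Satisfaction of a formula in a structure under an assignment. -/
def Formula.Realize (M : Struct) : (ℕ → M.carrier) → Formula → Prop
  | v, .eq t u => Term.val M v t = Term.val M v u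
  | v, .lt t u => M.lt (Term.val M v t) (Term.val M v u)
  | v, .not φ => ¬ Formula.Realize M v φ
  | v, .and φ ψ => Formula.Realize M v φ ∧ Formula.Realize M v ψ
  | v, .or φ ψ => Formula.Realize M v φ ∨ Formula.Realize M v ψ
  | v, .imp φ ψ => Formula.Realize M v φ → Formula.Realize M v ψ
  | v, .all i φ => ∀ a : M.carrier, Formula.Realize M (Function.update v i a) φ
  | v, .ex i φ => ∃ a : M.carrier, Formula.Realize M (Function.update v i a) φ

/-- ω : the standard model of arithmetic. -/
@[reducible] def stdModel : Struct :=
  { carrier := ℕ, zero := 0, succ := Nat.succ, add := (· + ·), mul := (· * ·),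
    lt := (· < ·) }

/-- A formula is true if it holds in the standard model ω (under every assignment). -/
def IsTrue (φ : Formula) : Prop := ∀ v : ℕ → ℕ, Formula.Realize stdModel v φ

/-- The value of a (closed) term in the standard model ω. -/
def Term.valNat (t : Term) : ℕ := Term.val stdModel (fun _ => 0) t

/-- A sentence is a formula with no free variables. -/
def Formula.IsSentence (φ : Formula) : Prop := φ.freeVars = ∅

/-- Provability from a theory; by the Gödel completeness theorem, identified with
semantic consequence. -/
def Proves (T : Set Formula) (φ : Formula) : Prop :=
  ∀ (M : Struct) (v : ℕ → M.carrier),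
    (∀ ψ ∈ T, Formula.Realize M v ψ) → Formula.Realize M v φ

/-- Consistency: no formula is both provable and refutable. -/
def Consistent (T : Set Formula) : Prop :=
  ¬ ∃ φ : Formula, Proves T φ ∧ Proves T (.not φ)

/-- The biconditional, as an abbreviation. -/
def Formula.iffF (φ ψ : Formula) : Formula := .and (.imp φ ψ) (.imp ψ φ)

def v0 : Term := .var 0
def v1 : Term := .var 1
def v2 : Term := .var 2

/-- The axioms of Robinson arithmetic Q (with < defined as usual). -/
def QAxioms : Set Formula :=
  { .all 0 (.all 1 (.imp (.eq (.succ v0) (.succ v1)) (.eq v0 v1))),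
    .all 0 (.not (.eq (.succ v0) .zero)),
    .all 0 (.imp (.not (.eq v0 .zero)) (.ex 1 (.eq v0 (.succ v1)))),
    .all 0 (.eq (.add v0 .zero) v0),
    .all 0 (.all 1 (.eq (.add v0 (.succ v1)) (.succ (.add v0 v1)))),
    .all 0 (.eq (.mul v0 .zero) .zero),
    .all 0 (.all 1 (.eq (.mul v0 (.succ v1)) (.add (.mul v0 v1) v0))),
    .all 0 (.all 1 (Formula.iffF (.lt v0 v1) (.ex 2 (.eq (.add v2 (.succ v0)) v1)))) }

/-- Pr_S : the set of Gödel numbers of sentences provable in S. -/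
def PrSet (T : Set Formula) : Set ℕ :=
  {m | ∃ σ : Formula, σ.IsSentence ∧ Proves T σ ∧ m = σ.gnum}

/-- A formula μ with at most the free variable v₀ names the number i in T
if T ⊢ (∀v₀)(μ(v₀) ↔ v₀ = i). -/
def Names (T : Set Formula) (μ : Formula) (i : ℕ) : Prop :=
  μ.freeVars ⊆ {0} ∧ Proves T (.all 0 (Formula.iffF μ (.eq v0 (numeral i))))

/-- i is named in T by some formula of length < m. -/
def Nameable (T : Set Formula) (m i : ℕ) : Prop :=
  ∃ μ : Formula, μ.length < m ∧ Names T μ i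

/-- φ(v₀) defines the set A in the standard model ω. -/
def DefinesSet (φ : Formula) (A : Set ℕ) : Prop :=
  φ.freeVars ⊆ {0} ∧ ∀ i : ℕ, i ∈ A ↔ IsTrue (φ.subst 0 (numeral i))

/-- A set of natural numbers is definable (in ω). -/
def Definable (A : Set ℕ) : Prop := ∃ φ : Formula, DefinesSet φ A

/-- φ(v₀,v₁) defines the binary relation R in the standard model ω. -/
def DefinesRel (φ : Formula) (R : ℕ → ℕ → Prop) : Prop :=
  φ.freeVars ⊆ {0, 1} ∧
    ∀ i j : ℕ, R i j ↔ IsTrue ((φ.subst 0 (numeral i)).subst 1 (numeral j))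

/-- The relation B of Boolos's construction: (i,j) ∈ B iff some formula μ with at most
the free variable v₀, with ⌜μ⌝ < g(j) and |μ| < j, names i. -/
def BRel (T : Set Formula) (g : ℕ → ℕ) (i j : ℕ) : Prop :=
  ∃ μ : Formula, μ.gnum < g j ∧ μ.length < j ∧ Names T μ i

/-- g is a recursive function bounding Gödel numbers in terms of length, as in the
construction: whenever all variables of μ are among the first j ones and |μ| < j,
we have ⌜μ⌝ < g(j). -/
def GoodBound (g : ℕ → ℕ) : Prop :=
  Computable g ∧
    ∀ (μ : Formula) (j : ℕ), μ.allVars ⊆ Finset.range j → μ.length < j → μ.gnum < g j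

/-- ψ(v₀,v₁) ≔ ¬φ(v₀,v₁) ∧ (∀v₂ < v₀) φ(v₂,v₁). -/
def psiOf (φ : Formula) : Formula :=
  .and (.not φ) (.all 2 (.imp (.lt v2 v0) (φ.subst 0 v2)))

/-- The closed term t ≔ 10·(k·k). -/
def tTerm (k : ℕ) : Term := .mul (numeral 10) (.mul (numeral k) (numeral k))

lemma Term.val_ext (M : Struct) (v w : ℕ → M.carrier) (t : Term)
    (h : ∀ j ∈ t.varsOf, v j = w j) : t.val M v = t.val M w := by
  induction t with
  | var i => exact h i (by simp [Term.varsOf])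
  | zero => rfl
  | succ t ih =>
      simp only [Term.val]; rw [ih (fun j hj => h j (by simpa [Term.varsOf] using hj))]
  | add t u iht ihu =>
      simp only [Term.val]
      rw [iht (fun j hj => h j (by simp [Term.varsOf, hj])),
        ihu (fun j hj => h j (by simp [Term.varsOf, hj]))]
  | mul t u iht ihu =>
      simp only [Term.val]
      rw [iht (fun j hj => h j (by simp [Term.varsOf, hj])),
        ihu (fun j hj => h j (by simp [Term.varsOf, hj]))]

lemma Formula.realize_ext (M : Struct) (φ : Formula) :
    ∀ (v w : ℕ → M.carrier), (∀ j ∈ φ.freeVars, v j = w j) →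
      (Formula.Realize M v φ ↔ Formula.Realize M w φ) := by
  induction φ with
  | eq t u =>
      intro v w h
      simp only [Formula.Realize]
      rw [Term.val_ext M v w t (fun j hj => h j (by simp [Formula.freeVars, hj])),
        Term.val_ext M v w u (fun j hj => h j (by simp [Formula.freeVars, hj]))]
  | lt t u =>
      intro v w h
      simp only [Formula.Realize]
      rw [Term.val_ext M v w t (fun j hj => h j (by simp [Formula.freeVars, hj])),
        Term.val_ext M v w u (fun j hj => h j (by simp [Formula.freeVars, hj]))]
  | not φ ih =>
      intro v w h
      simp only [Formula.Realize]
      rw [ih v w (fun j hj => h j (by simpa [Formula.freeVars] using hj))]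
  | and φ ψ ihφ ihψ =>
      intro v w h
      simp only [Formula.Realize]
      rw [ihφ v w (fun j hj => h j (by simp [Formula.freeVars, hj])),
        ihψ v w (fun j hj => h j (by simp [Formula.freeVars, hj]))]
  | or φ ψ ihφ ihψ =>
      intro v w h
      simp only [Formula.Realize]
      rw [ihφ v w (fun j hj => h j (by simp [Formula.freeVars, hj])),
        ihψ v w (fun j hj => h j (by simp [Formula.freeVars, hj]))]
  | imp φ ψ ihφ ihψ =>
      intro v w h
      simp only [Formula.Realize]
      rw [ihφ v w (fun j hj => h j (by simp [Formula.freeVars, hj])),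
        ihψ v w (fun j hj => h j (by simp [Formula.freeVars, hj]))]
  | all i φ ih =>
      intro v w h
      simp only [Formula.Realize]
      refine forall_congr' fun a => ih _ _ fun j hj => ?_
      rcases eq_or_ne j i with rfl | hne
      · simp
      · simp only [Function.update_of_ne hne]
        exact h j (by simp [Formula.freeVars, Finset.mem_erase, hne, hj])
  | ex i φ ih =>
      intro v w h
      simp only [Formula.Realize]
      refine exists_congr fun a => ih _ _ fun j hj => ?_
      rcases eq_or_ne j i with rfl | hne
      · simp
      · simp only [Function.update_of_ne hne]
        exact h j (by simp [Formula.freeVars, Finset.mem_erase, hne, hj])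

lemma Term.val_subst (M : Struct) (v : ℕ → M.carrier) (t : Term) (x : ℕ) (s : Term) :
    (t.subst x s).val M v = t.val M (Function.update v x (s.val M v)) := by
  induction t with
  | var i =>
      by_cases h : i = x
      · subst h; simp [Term.subst, Term.val]
      · simp [Term.subst, Term.val, h, Function.update_of_ne h]
  | zero => rfl
  | succ t ih => simp [Term.subst, Term.val, ih]
  | add t u iht ihu => simp [Term.subst, Term.val, iht, ihu]
  | mul t u iht ihu => simp [Term.subst, Term.val, iht, ihu]

lemma Formula.realize_subst (M : Struct) (φ : Formula) :
    ∀ (v : ℕ → M.carrier) (x : ℕ) (s : Term), (∀ j ∈ s.varsOf, j ∉ φ.allVars) →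
      (Formula.Realize M v (φ.subst x s) ↔
        Formula.Realize M (Function.update v x (s.val M v)) φ) := by
  induction φ with
  | eq t u =>
      intro v x s _
      simp [Formula.subst, Formula.Realize, Term.val_subst]
  | lt t u =>
      intro v x s _
      simp [Formula.subst, Formula.Realize, Term.val_subst]
  | not φ ih =>
      intro v x s h
      simp only [Formula.subst, Formula.Realize]
      rw [ih v x s (by simpa [Formula.allVars] using h)]
  | and φ ψ ihφ ihψ =>
      intro v x s h
      simp only [Formula.subst, Formula.Realize]
      rw [ihφ v x s (fun j hj hm => h j hj (by simp [Formula.allVars, hm])),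
        ihψ v x s (fun j hj hm => h j hj (by simp [Formula.allVars, hm]))]
  | or φ ψ ihφ ihψ =>
      intro v x s h
      simp only [Formula.subst, Formula.Realize]
      rw [ihφ v x s (fun j hj hm => h j hj (by simp [Formula.allVars, hm])),
        ihψ v x s (fun j hj hm => h j hj (by simp [Formula.allVars, hm]))]
  | imp φ ψ ihφ ihψ =>
      intro v x s h
      simp only [Formula.subst, Formula.Realize]
      rw [ihφ v x s (fun j hj hm => h j hj (by simp [Formula.allVars, hm])),
        ihψ v x s (fun j hj hm => h j hj (by simp [Formula.allVars, hm]))]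
  | all i φ ih =>
      intro v x s h
      by_cases hix : i = x
      · subst hix
        simp only [Formula.subst, if_pos rfl, Formula.Realize]
        refine forall_congr' fun a => ?_
        rw [Function.update_idem]
      · simp only [Formula.subst, if_neg hix, Formula.Realize]
        refine forall_congr' fun a => ?_
        have hi : i ∉ s.varsOf := fun hm => h i hm (by simp [Formula.allVars])
        rw [ih (Function.update v i a) x s
          (fun j hj hm => h j hj (by simp [Formula.allVars, hm]))]
        have hval : s.val M (Function.update v i a) = s.val M v := by
          refine Term.val_ext M _ _ s fun j hj => ?_
          exact Function.update_of_ne (by rintro rfl; exact hi hj) _ _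
        rw [hval, Function.update_comm hix]
  | ex i φ ih =>
      intro v x s h
      by_cases hix : i = x
      · subst hix
        simp only [Formula.subst, if_pos rfl, Formula.Realize]
        refine exists_congr fun a => ?_
        rw [Function.update_idem]
      · simp only [Formula.subst, if_neg hix, Formula.Realize]
        refine exists_congr fun a => ?_
        have hi : i ∉ s.varsOf := fun hm => h i hm (by simp [Formula.allVars])
        rw [ih (Function.update v i a) x s
          (fun j hj hm => h j hj (by simp [Formula.allVars, hm]))]
        have hval : s.val M (Function.update v i a) = s.val M v := by
          refine Term.val_ext M _ _ s fun j hj => ?_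
          exact Function.update_of_ne (by rintro rfl; exact hi hj) _ _
        rw [hval, Function.update_comm hix]

lemma numeral_val (M : Struct) (v w : ℕ → M.carrier) (n : ℕ) :
    (numeral n).val M v = (numeral n).val M w := by
  induction n with
  | zero => rfl
  | succ n ih => simp only [numeral, Term.val]; rw [ih]

lemma numeral_varsOf (n : ℕ) : (numeral n).varsOf = ∅ := by
  induction n with
  | zero => rfl
  | succ n ih => simpa [numeral, Term.varsOf] using ih

/-- **Provable weak uniqueness of least elements in Q.** For any formula μ(v₀) (with v₂
not occurring in μ, so that μ(v₂) is a genuine substitution instance) and any number i,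
Q ⊢ [¬μ(i) ∧ (∀v₂ < i)μ(v₂)] → (∀v₀)[(¬μ(v₀) ∧ (∀v₂ < v₀)μ(v₂)) → v₀ = i]. -/
theorem least_element_unique (μ : Formula) (hfree : μ.freeVars ⊆ {0})
    (hfresh : 2 ∉ μ.allVars) (i : ℕ) :
    Proves QAxioms
      (.imp
        (.and (.not (μ.subst 0 (numeral i)))
          (.all 2 (.imp (.lt v2 (numeral i)) (μ.subst 0 v2))))
        (.all 0
          (.imp (.and (.not μ) (.all 2 (.imp (.lt v2 v0) (μ.subst 0 v2))))
            (.eq v0 (numeral i))))) := by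
  intro M v H
  -- numeral values
  set nm : ℕ → M.carrier := fun n => (numeral n).val M v with hnm
  have nm_succ : ∀ n, nm (n + 1) = M.succ (nm n) := fun n => rfl
  have nm_zero : nm 0 = M.zero := rfl
  have nm_indep : ∀ (w : ℕ → M.carrier) (n : ℕ), (numeral n).val M w = nm n :=
    fun w n => numeral_val M w v n
  -- extract the axioms
  have ax3 : ∀ a : M.carrier, a ≠ M.zero → ∃ b, a = M.succ b := by
    have h := H _ (show Formula.all 0 (.imp (.not (.eq v0 .zero)) (.ex 1 (.eq v0 (.succ v1)))) ∈ QAxioms by simp [QAxioms])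
    simpa [Formula.Realize, Term.val, v0, v1, Function.update_apply] using h
  have ax4 : ∀ a : M.carrier, M.add a M.zero = a := by
    have h := H _ (show Formula.all 0 (.eq (.add v0 .zero) v0) ∈ QAxioms by simp [QAxioms])
    simpa [Formula.Realize, Term.val, v0, Function.update_apply] using h
  have ax5 : ∀ a b : M.carrier, M.add a (M.succ b) = M.succ (M.add a b) := by
    have h := H _ (show Formula.all 0 (.all 1 (.eq (.add v0 (.succ v1)) (.succ (.add v0 v1)))) ∈ QAxioms by simp [QAxioms])
    simpa [Formula.Realize, Term.val, v0, v1, Function.update_apply] using h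
  have ax8 : ∀ a b : M.carrier, M.lt a b ↔ ∃ c, M.add c (M.succ a) = b := by
    have h := H _ (show Formula.all 0 (.all 1 (Formula.iffF (.lt v0 v1) (.ex 2 (.eq (.add v2 (.succ v0)) v1)))) ∈ QAxioms by simp [QAxioms])
    simp only [Formula.Realize, Formula.iffF, Term.val, v0, v1, v2,
      Function.update_apply] at h
    intro a b
    have := h a b
    constructor
    · intro hab
      obtain ⟨c, hc⟩ := this.1 hab
      exact ⟨c, by simpa using hc⟩
    · rintro ⟨c, hc⟩
      exact this.2 ⟨c, by simpa using hc⟩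
  -- arithmetic of numerals
  have hadd : ∀ m n : ℕ, M.add (nm m) (nm n) = nm (m + n) := by
    intro m n
    induction n with
    | zero => simpa [nm_zero] using ax4 (nm m)
    | succ n ih =>
        rw [nm_succ, ax5, ih, ← nm_succ, Nat.add_assoc]
  have hlt_of_lt : ∀ m n : ℕ, m < n → M.lt (nm m) (nm n) := by
    intro m n hmn
    rw [ax8]
    refine ⟨nm (n - m - 1), ?_⟩
    rw [← nm_succ, hadd]
    congr 1
    omega
  -- trichotomy against numerals
  have htri : ∀ (n : ℕ) (a : M.carrier),
      a = nm n ∨ M.lt a (nm n) ∨ M.lt (nm n) a := by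
    intro n
    induction n with
    | zero =>
        intro a
        by_cases h0 : a = M.zero
        · exact Or.inl (by rw [h0, nm_zero])
        · obtain ⟨b, rfl⟩ := ax3 a h0
          refine Or.inr (Or.inr ?_)
          rw [ax8]
          exact ⟨b, by rw [nm_zero, ax5, ax4]⟩
    | succ n ih =>
        intro a
        by_cases h0 : a = M.zero
        · subst h0
          rw [← nm_zero]
          exact Or.inr (Or.inl (hlt_of_lt 0 (n + 1) (by omega)))
        · obtain ⟨b, rfl⟩ := ax3 a h0
          rcases ih b with hb | hb | hb
          · exact Or.inl (by rw [hb, nm_succ])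
          · obtain ⟨c, hc⟩ := (ax8 b (nm n)).1 hb
            refine Or.inr (Or.inl ?_)
            rw [ax8]
            exact ⟨c, by rw [ax5, hc, nm_succ]⟩
          · obtain ⟨c, hc⟩ := (ax8 (nm n) b).1 hb
            refine Or.inr (Or.inr ?_)
            rw [ax8, nm_succ]
            exact ⟨c, by rw [ax5, hc]⟩
  -- the predicate defined by μ
  set P : M.carrier → Prop := fun a => Formula.Realize M (Function.update v 0 a) μ with hP
  have hPext : ∀ (w : ℕ → M.carrier) (c : M.carrier),
      Formula.Realize M (Function.update w 0 c) μ ↔ P c := by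
    intro w c
    refine Formula.realize_ext M μ _ _ fun j hj => ?_
    have : j = 0 := by simpa using hfree hj
    subst this
    simp
  have hsub_num : ∀ w : ℕ → M.carrier,
      Formula.Realize M w (μ.subst 0 (numeral i)) ↔ P (nm i) := by
    intro w
    rw [Formula.realize_subst M μ w 0 (numeral i) (by simp [numeral_varsOf])]
    rw [nm_indep w i]
    exact hPext w (nm i)
  have hsub_v2 : ∀ w : ℕ → M.carrier,
      Formula.Realize M w (μ.subst 0 v2) ↔ P (w 2) := by
    intro w
    rw [Formula.realize_subst M μ w 0 v2 (by
      intro j hj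
      have : j = 2 := by simpa [v2, Term.varsOf] using hj
      subst this
      exact hfresh)]
    have : (v2).val M w = w 2 := rfl
    rw [this]
    exact hPext w (w 2)
  have hv2val : ∀ w : ℕ → M.carrier, Term.val M w v2 = w 2 := fun _ => rfl
  have hv0val : ∀ w : ℕ → M.carrier, Term.val M w v0 = w 0 := fun _ => rfl
  -- now the main argument
  simp only [Formula.Realize]
  rintro ⟨hni, hbelow⟩
  intro a
  rintro ⟨hna, hbelowa⟩
  have hni' : ¬ P (nm i) := fun h => hni ((hsub_num v).2 h)
  have hbelow' : ∀ b : M.carrier, M.lt b (nm i) → P b := by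
    intro b hb
    have h2 := hbelow b
    simp only [Formula.Realize, hv2val, nm_indep, Function.update_apply] at h2
    have := h2 (by simpa using hb)
    rw [hsub_v2] at this
    simpa using this
  have hna' : ¬ P a := fun h => hna ((hPext v a).2 h)
  have hbelowa' : ∀ b : M.carrier, M.lt b a → P b := by
    intro b hb
    have h2 := hbelowa b
    simp only [Formula.Realize, hv2val, hv0val, Function.update_apply] at h2
    have := h2 (by simpa using hb)
    rw [hsub_v2] at this
    simpa using this
  have : a = nm i := by
    rcases htri i a with h | h | h
    · exact h
    · exact absurd (hbelow' a h) hna'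
    · exact absurd (hbelowa' (nm i) h) hni'
  rw [hv0val, nm_indep]
  simpa using this

end Boolos
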